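/- arXiv:0901.1518 — 4 statements merged into one kernel-verified Lean document; each statement's English description precedes it below -/
import Mathlib

section
/- Let γ > 0, τ < 0, and let δ: ℝ → ℝ tend to 0 at infinity. Then, uniformly in y ≥ 1, [y{1 + δ(u) - δ(u) y^τ}]^{-1/γ} = y^{-1/γ}{1 - γ^{-1} δ(u)(1 - y^τ)} + o(|δ(u)|) as u → ∞; i.e., sup_{y ≥ 1} |[y{1 + δ(u) - δ(u) y^τ}]^{-1/γ} - y^{-1/γ}{1 - γ^{-1} δ(u)(1 - y^τ)}| = o(|δ(u)|) as u → ∞. -/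
/-!
With `x = δ(u) (1 - y^τ)` the left-hand side factors as `y^{-1/γ} ((1 + x)^{-1/γ} - (1 - x/γ))`.
For `y ≥ 1` the factor `y^{-1/γ}` is at most `1` and `|x| ≤ |δ(u)|`, so the claim reduces to the
first-order Taylor expansion of `x ↦ (1 + x)^{-1/γ}` at `0`, applied uniformly on the interval
`|x| ≤ |δ(u)|`, which shrinks to `0`.
-/

open Real Filter Topology Asymptotics

theorem isLittleO_one_add_rpow_sub_one_add_mul (p : ℝ) :
    (fun x : ℝ => (1 + x) ^ p - (1 + p * x)) =o[𝓝 0] id := by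
  have hderiv : HasDerivAt (fun x : ℝ => (1 + x) ^ p) p 0 := by
    simpa using ((hasDerivAt_id (0 : ℝ)).const_add 1).rpow_const (p := p) (by norm_num)
  have := hderiv.isLittleO
  simp only [add_zero, one_rpow, sub_zero, smul_eq_mul] at this
  refine this.congr_left fun x => ?_
  ring

theorem eventually_forall_abs_le_of_tendsto_zero {α : Type*} {l : Filter α} {δ : α → ℝ}
    (hδ : Tendsto δ l (𝓝 0)) {P : ℝ → Prop} (hP : ∀ᶠ x in 𝓝 0, P x) :
    ∀ᶠ u in l, ∀ x, |x| ≤ |δ u| → P x := by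
  obtain ⟨r, hr, hball⟩ := Metric.eventually_nhds_iff.mp hP
  filter_upwards [hδ (Metric.ball_mem_nhds 0 hr)] with u hu x hx
  refine hball ?_
  rw [Set.mem_preimage, Metric.mem_ball, dist_zero_right, norm_eq_abs] at hu
  rw [dist_zero_right, norm_eq_abs]
  exact hx.trans_lt hu

theorem one_sub_rpow_mem_Icc {y τ : ℝ} (hy : 1 ≤ y) (hτ : τ ≤ 0) : 1 - y ^ τ ∈ Set.Icc 0 1 := by
  have hle : y ^ τ ≤ 1 := rpow_le_one_of_one_le_of_nonpos hy hτ
  have hpos : 0 < y ^ τ := rpow_pos_of_pos (zero_lt_one.trans_le hy) τ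
  constructor <;> linarith

theorem abs_mul_le_abs_of_mem_Icc {t s : ℝ} (hs : s ∈ Set.Icc 0 1) : |t * s| ≤ |t| := by
  rw [abs_mul, abs_of_nonneg hs.1]
  exact mul_le_of_le_one_right (abs_nonneg t) hs.2

/-- Uniformly in y ≥ 1, [y{1 + δ(u) - δ(u)y^τ}]^{-1/γ}
= y^{-1/γ}{1 - γ⁻¹δ(u)(1 - y^τ)} + o(|δ(u)|) as u → ∞. -/
theorem epd_expansion (γ τ : ℝ) (hγ : 0 < γ) (hτ : τ < 0) (δ : ℝ → ℝ)
    (hδ : Tendsto δ atTop (nhds 0)) :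
    ∀ ε > 0, ∀ᶠ u in atTop, ∀ y : ℝ, 1 ≤ y →
      |(y * (1 + δ u - δ u * y ^ τ)) ^ (-1 / γ) -
        y ^ (-1 / γ) * (1 - γ⁻¹ * δ u * (1 - y ^ τ))| ≤ ε * |δ u| := by
  intro ε hε
  set p := -1 / γ
  have hp : p ≤ 0 := div_nonpos_of_nonpos_of_nonneg (by norm_num) hγ.le
  have hlocal : ∀ᶠ x in 𝓝 (0 : ℝ), 0 ≤ 1 + x ∧ |(1 + x) ^ p - (1 + p * x)| ≤ ε * |x| := by
    filter_upwards [eventually_gt_nhds (show (-1 : ℝ) < 0 by norm_num),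
      (isLittleO_one_add_rpow_sub_one_add_mul p).bound hε] with x hx1 hx
    exact ⟨by linarith, by simpa using hx⟩
  filter_upwards [eventually_forall_abs_le_of_tendsto_zero hδ hlocal] with u hu y hy
  set x := δ u * (1 - y ^ τ)
  have hxδ : |x| ≤ |δ u| := abs_mul_le_abs_of_mem_Icc (one_sub_rpow_mem_Icc hy hτ.le)
  obtain ⟨hx0, hxε⟩ := hu x hxδ
  have hy0 : 0 ≤ y := zero_le_one.trans hy
  have hyp : |y ^ p| ≤ 1 := by
    rw [abs_of_nonneg (rpow_nonneg hy0 p)]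
    exact rpow_le_one_of_one_le_of_nonpos hy hp
  have hfactor : (y * (1 + δ u - δ u * y ^ τ)) ^ p - y ^ p * (1 - γ⁻¹ * δ u * (1 - y ^ τ)) =
      y ^ p * ((1 + x) ^ p - (1 + p * x)) := by
    rw [show y * (1 + δ u - δ u * y ^ τ) = y * (1 + x) by ring, mul_rpow hy0 hx0]
    ring
  calc |(y * (1 + δ u - δ u * y ^ τ)) ^ p - y ^ p * (1 - γ⁻¹ * δ u * (1 - y ^ τ))|
      = |y ^ p| * |(1 + x) ^ p - (1 + p * x)| := by rw [hfactor, abs_mul]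
    _ ≤ 1 * (ε * |x|) := mul_le_mul hyp hxε (abs_nonneg _) zero_le_one
    _ ≤ ε * |δ u| := by rw [one_mul]; exact mul_le_mul_of_nonneg_left hxδ hε.le
end

section
/- Let γ > 0, τ < 0, and let F satisfy x^{1/γ}(1-F(x)) → C ∈ (0,∞) as x → ∞. With U(y) = inf{x : F(x) ≥ 1 - 1/y} the tail quantile function, one has y^{-γ} U(y) → C^γ as y → ∞. -/
/-!
Let `g x = x ^ (1 / γ) * (1 - F x)`. If `c < C < c'`, then for large `y` the point `(c' y) ^ γ`
has `g < c'`, i.e. `1 - F < 1 / y`, so it lies in the set whose infimum is `U y`; and every point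
`x` of that set is large (by monotonicity, since `1 - F` is eventually positive), so `g x > c`
gives `x > (c y) ^ γ`. Hence `c ^ γ ≤ y ^ (-γ) U y ≤ c' ^ γ` eventually, and continuity of
`c ↦ c ^ γ` at `C` squeezes the limit.
-/

open Real Filter Topology

/-- The tail quantile function U(y) = Q(1 - 1/y), with Q the generalized
inverse of F. -/
noncomputable def tailQuantile (F : ℝ → ℝ) (y : ℝ) : ℝ :=
  sInf {x : ℝ | 1 - 1 / y ≤ F x}

lemma tendsto_of_eventually_squeeze_continuousAt {α β : Type*} [TopologicalSpace β]
    [LinearOrder β] [OrderTopology β] {l : Filter α} {f : α → β} {g : ℝ → β} {a x₀ : ℝ}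
    (hg : ContinuousAt g x₀) (ha : a < x₀)
    (hlow : ∀ c ∈ Set.Ioo a x₀, ∀ᶠ t in l, g c ≤ f t)
    (hup : ∀ c, x₀ < c → ∀ᶠ t in l, f t ≤ g c) :
    Tendsto f l (𝓝 (g x₀)) := by
  refine tendsto_order.2 ⟨fun b hb => ?_, fun b hb => ?_⟩
  · obtain ⟨c, hbc, hc⟩ := ((hg.tendsto.eventually (lt_mem_nhds hb)).filter_mono
      nhdsWithin_le_nhds |>.and (Ioo_mem_nhdsLT ha)).exists
    exact (hlow c hc).mono fun t ht => hbc.trans_le ht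
  · obtain ⟨c, hcb, hc⟩ := ((hg.tendsto.eventually (gt_mem_nhds hb)).filter_mono
      nhdsWithin_le_nhds |>.and (self_mem_nhdsWithin : Set.Ioi x₀ ∈ 𝓝[>] x₀)).exists
    exact (hup c hc).mono fun t ht => ht.trans_lt hcb

lemma rpow_neg_mul_mul_rpow {c y : ℝ} (γ : ℝ) (hc : 0 ≤ c) (hy : 0 < y) :
    y ^ (-γ) * (c * y) ^ γ = c ^ γ := by
  rw [mul_rpow hc hy.le, rpow_neg hy.le]
  field_simp

section TailQuantile

variable {F : ℝ → ℝ} {γ C c : ℝ}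

lemma eventually_lt_of_one_sub_le {x₀ : ℝ} (hF : Monotone F) (hx₀ : F x₀ < 1) :
    ∀ᶠ y in atTop, ∀ x, 1 - 1 / y ≤ F x → x₀ < x := by
  filter_upwards [eventually_gt_atTop (1 / (1 - F x₀))] with y hy x hx
  have hy₀ : 0 < y := (one_div_pos.2 (sub_pos.2 hx₀)).trans hy
  have : 1 / y < 1 - F x₀ := by rwa [div_lt_iff₀ hy₀, mul_comm, ← div_lt_iff₀ (sub_pos.2 hx₀)]
  exact lt_of_not_ge fun h => by linarith [hF h]

lemma eventually_rpow_le_of_one_sub_le (hγ : 0 < γ) (hF : Monotone F)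
    (htail : Tendsto (fun x => x ^ (1 / γ) * (1 - F x)) atTop (𝓝 C)) (hc : 0 < c) (hcC : c < C) :
    ∀ᶠ y in atTop, ∀ x, 1 - 1 / y ≤ F x → (c * y) ^ γ ≤ x := by
  obtain ⟨x₀, hx₀⟩ := eventually_atTop.1
    ((htail.eventually (lt_mem_nhds hcC)).and (eventually_gt_atTop 0))
  have hFx₀ : F x₀ < 1 := by
    obtain ⟨hcx₀, hx₀_pos⟩ := hx₀ x₀ le_rfl
    exact sub_pos.1 (pos_of_mul_pos_right (hc.trans hcx₀) (rpow_nonneg hx₀_pos.le _))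
  filter_upwards [eventually_lt_of_one_sub_le hF hFx₀, eventually_gt_atTop 0] with y hy hy₀ x hx
  obtain ⟨hcx, hx_pos⟩ := hx₀ x (hy x hx).le
  have hcy : c * y ≤ x ^ (1 / γ) := calc
    c * y ≤ x ^ (1 / γ) * (1 - F x) * y := by gcongr
    _ ≤ x ^ (1 / γ) * (1 / y) * y := by gcongr; linarith
    _ = x ^ (1 / γ) := by field_simp
  calc (c * y) ^ γ ≤ (x ^ (1 / γ)) ^ γ := by gcongr
    _ = x := by rw [one_div, rpow_inv_rpow hx_pos.le hγ.ne']

lemma eventually_one_sub_le_rpow (hγ : 0 < γ)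
    (htail : Tendsto (fun x => x ^ (1 / γ) * (1 - F x)) atTop (𝓝 C)) (hCc : C < c) (hc : 0 < c) :
    ∀ᶠ y in atTop, 1 - 1 / y ≤ F ((c * y) ^ γ) := by
  have hlim : Tendsto (fun y => (c * y) ^ γ) atTop atTop :=
    (tendsto_rpow_atTop hγ).comp (tendsto_id.const_mul_atTop hc)
  filter_upwards [hlim.eventually (htail.eventually (gt_mem_nhds hCc)), eventually_gt_atTop 0]
    with y hy hy₀
  rw [one_div, rpow_rpow_inv (by positivity) hγ.ne', mul_assoc, mul_lt_iff_lt_one_right hc] at hy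
  have : 1 - F ((c * y) ^ γ) < 1 / y := by rwa [lt_div_iff₀ hy₀, mul_comm]
  linarith

lemma eventually_rpow_le_tailQuantile (hγ : 0 < γ) (hF : Monotone F)
    (htail : Tendsto (fun x => x ^ (1 / γ) * (1 - F x)) atTop (𝓝 C)) (hc : 0 < c) (hcC : c < C) :
    ∀ᶠ y in atTop, (c * y) ^ γ ≤ tailQuantile F y := by
  filter_upwards [eventually_rpow_le_of_one_sub_le hγ hF htail hc hcC,
    eventually_one_sub_le_rpow hγ htail (lt_add_one C) (by linarith)] with y hlow hmem
  exact le_csInf ⟨_, hmem⟩ hlow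

lemma eventually_tailQuantile_le_rpow (hγ : 0 < γ) (hC : 0 < C) (hF : Monotone F)
    (htail : Tendsto (fun x => x ^ (1 / γ) * (1 - F x)) atTop (𝓝 C)) (hCc : C < c) :
    ∀ᶠ y in atTop, tailQuantile F y ≤ (c * y) ^ γ := by
  filter_upwards [eventually_rpow_le_of_one_sub_le hγ hF htail (half_pos hC) (half_lt_self hC),
    eventually_one_sub_le_rpow hγ htail hCc (hC.trans hCc)] with y hlow hmem
  exact csInf_le ⟨_, hlow⟩ hmem

end TailQuantile

/-- If x^{1/γ}(1-F(x)) → C ∈ (0,∞), then y^{-γ} U(y) → C^γ as y → ∞. -/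
theorem tailQuantile_asymptotics (γ C : ℝ) (hγ : 0 < γ) (hC : 0 < C)
    (F : ℝ → ℝ) (hF : Monotone F)
    (htail : Tendsto (fun x => x ^ (1 / γ) * (1 - F x)) atTop (nhds C)) :
    Tendsto (fun y => y ^ (-γ) * tailQuantile F y) atTop (nhds (C ^ γ)) := by
  refine tendsto_of_eventually_squeeze_continuousAt (g := fun c => c ^ γ)
    (continuousAt_rpow_const _ _ (Or.inr hγ.le)) hC (fun c hc => ?_) (fun c hc => ?_)
  · filter_upwards [eventually_rpow_le_tailQuantile hγ hF htail hc.1 hc.2,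
      eventually_gt_atTop 0] with y hU hy
    rw [← rpow_neg_mul_mul_rpow γ hc.1.le hy]
    gcongr
  · filter_upwards [eventually_tailQuantile_le_rpow hγ hC hF htail hc,
      eventually_gt_atTop 0] with y hU hy
    rw [← rpow_neg_mul_mul_rpow γ (hC.trans hc).le hy]
    gcongr
end

section
/- Let η be a measurable function, eventually nonzero and of constant sign, with |η| regularly varying of index ρ < 0. Then for every x₀ > 0, sup_{x ≥ x₀} |η(xy)/η(y) - x^ρ| → 0 as y → ∞. -/
/-!
In logarithmic variables `H t = log |η (exp t)|` regular variation says `H (t + u) - H t → ρ u`,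
i.e. `h t = H t - ρ t` is additively slowly varying. The core is the uniform convergence of
`h (t + u) - h t → 0` for `u` in a compact interval: if it failed along `tₙ → ∞`, `uₙ ∈ [a, b]`,
Egorov's theorem would give large sets on which `h (tₙ + ·) - h tₙ` and
`h (tₙ + uₙ + ·) - h (tₙ + uₙ)` are uniformly small; by translation invariance of Lebesgue measure
these sets meet, and a common point `s` links `h (tₙ + uₙ)` to `h tₙ` through `h (tₙ + s)`.
Since `ρ < 0`, uniformity for `u ∈ [1, 2]` and telescoping give `H (t + u) - H t ≤ (u - 1) ρ / 2`
for all `u ≥ 1`, so for large `x` both `η (x y) / η y` and `x ^ ρ` are uniformly small; the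
remaining compact range of `x` is covered by the compact case.
-/

open Real Filter

/-- Regular variation at infinity with index ρ. -/
def RegularlyVarying (f : ℝ → ℝ) (ρ : ℝ) : Prop :=
  ∀ x : ℝ, 0 < x → Tendsto (fun u => f (u * x) / f u) atTop (nhds (x ^ ρ))

open MeasureTheory Set Topology

/-- The additive form of slow variation: `ℓ` is slowly varying iff `log ∘ ℓ ∘ exp` is. -/
def AddSlowlyVarying (h : ℝ → ℝ) : Prop :=
  ∀ u : ℝ, Tendsto (fun t => h (t + u) - h t) atTop (𝓝 0)

theorem exists_subset_Icc_tendstoUniformlyOn {f : ℕ → ℝ → ℝ} (hf : ∀ n, Measurable (f n))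
    {a b : ℝ} (hlim : ∀ s ∈ Icc a b, Tendsto (fun n => f n s) atTop (𝓝 0)) {δ : ℝ} (hδ : 0 < δ) :
    ∃ V ⊆ Icc a b, MeasurableSet V ∧ ENNReal.ofReal (b - a - δ) ≤ volume V ∧
      TendstoUniformlyOn f 0 atTop V := by
  obtain ⟨N, -, hNm, hNvol, hunif⟩ := tendstoUniformlyOn_of_ae_tendsto (μ := volume)
    (fun n => (hf n).stronglyMeasurable) stronglyMeasurable_const measurableSet_Icc
    measure_Icc_lt_top.ne (ae_of_all _ hlim) hδ
  refine ⟨Icc a b \ N, sdiff_subset, measurableSet_Icc.diff hNm, ?_, hunif⟩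
  calc ENNReal.ofReal (b - a - δ) = volume (Icc a b) - ENNReal.ofReal δ := by
        rw [ENNReal.ofReal_sub _ hδ.le, Real.volume_Icc]
    _ ≤ volume (Icc a b) - volume N := tsub_le_tsub_left hNvol _
    _ ≤ volume (Icc a b \ N) := le_measure_sdiff

namespace AddSlowlyVarying

variable {h : ℝ → ℝ}

theorem tendsto_sub_of_mem_Icc (hh : AddSlowlyVarying h) (hm : Measurable h) {t u : ℕ → ℝ}
    (ht : Tendsto t atTop atTop) {a b : ℝ} (hu : ∀ n, u n ∈ Icc a b) :
    Tendsto (fun n => h (t n + u n) - h (t n)) atTop (𝓝 0) := by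
  have hab : a ≤ b := (hu 0).1.trans (hu 0).2
  obtain ⟨V, hVsub, -, hVvol, hV⟩ := exists_subset_Icc_tendstoUniformlyOn
    (f := fun n s => h (t n + s) - h (t n)) (a := a) (b := b + 1)
    (fun n => (hm.comp (measurable_const_add _)).sub_const _)
    (fun s _ => (hh s).comp ht) (δ := 1 / 4) (by norm_num)
  have htu : Tendsto (fun n => t n + u n) atTop atTop :=
    tendsto_atTop_add_right_of_le _ a ht fun n => (hu n).1
  obtain ⟨W, hWsub, hWm, hWvol, hW⟩ := exists_subset_Icc_tendstoUniformlyOn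
    (f := fun n r => h (t n + u n + r) - h (t n + u n)) (a := 0) (b := 1)
    (fun n => (hm.comp (measurable_const_add _)).sub_const _)
    (fun r _ => (hh r).comp htu) (δ := 1 / 4) (by norm_num)
  rw [Metric.tendsto_nhds]
  intro ε hε
  filter_upwards [Metric.tendstoUniformlyOn_iff.1 hV (ε / 2) (half_pos hε),
    Metric.tendstoUniformlyOn_iff.1 hW (ε / 2) (half_pos hε)] with n hVn hWn
  -- `V` and the translate `u n + W` lie in `[a, b + 1]` and their measures add up to more
  obtain ⟨s, hsV, hsW⟩ : (V ∩ (· + -u n) ⁻¹' W).Nonempty := by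
    refine nonempty_inter_of_measure_lt_add volume (hWm.preimage (measurable_add_const _))
      hVsub (fun s hs => ?_) ?_
    · obtain ⟨hs₀, hs₁⟩ := hWsub hs
      obtain ⟨hua, hub⟩ := hu n
      exact ⟨by linarith, by linarith⟩
    · rw [measure_preimage_add_right, Real.volume_Icc]
      calc ENNReal.ofReal (b + 1 - a)
          < ENNReal.ofReal (b + 1 - a - 1 / 4) + ENNReal.ofReal (1 - 0 - 1 / 4) := by
            rw [← ENNReal.ofReal_add (by linarith) (by norm_num)]
            exact (ENNReal.ofReal_lt_ofReal_iff (by linarith)).2 (by linarith)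
        _ ≤ volume V + volume W := add_le_add hVvol hWvol
  have h₁ := hVn s hsV
  have h₂ := hWn _ hsW
  simp only [Pi.zero_apply, dist_zero_left, Real.norm_eq_abs] at h₁ h₂
  rw [show t n + u n + (s + -u n) = t n + s by ring] at h₂
  rw [dist_zero_right, Real.norm_eq_abs]
  linarith [abs_sub_le (h (t n + u n)) (h (t n + s)) (h (t n)),
    abs_sub_comm (h (t n + u n)) (h (t n + s))]

theorem eventually_forall_mem_Icc_abs_sub_lt (hh : AddSlowlyVarying h) (hm : Measurable h)
    (a b : ℝ) {ε : ℝ} (hε : 0 < ε) :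
    ∀ᶠ t in atTop, ∀ u ∈ Icc a b, |h (t + u) - h t| < ε := by
  by_contra hcon
  obtain ⟨t, ht, hbad⟩ := exists_seq_forall_of_frequently (not_eventually.1 hcon)
  push Not at hbad
  choose u hu hεu using hbad
  obtain ⟨n, hn⟩ := (Metric.tendsto_nhds.1 (hh.tendsto_sub_of_mem_Icc hm ht hu) ε hε).exists
  rw [dist_zero_right, Real.norm_eq_abs] at hn
  exact (hεu n).not_gt hn

end AddSlowlyVarying

theorem addSlowlyVarying_sub_mul_self {H : ℝ → ℝ} {ρ : ℝ}
    (hH : ∀ u, Tendsto (fun t => H (t + u) - H t) atTop (𝓝 (ρ * u))) :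
    AddSlowlyVarying fun t => H t - ρ * t := fun u => by
  simpa [mul_add] using (hH u).sub_const (ρ * u) |>.congr fun t => by ring

theorem sub_le_mul_of_forall_mem_Icc_one_two {f : ℝ → ℝ} {T c : ℝ} (hc : c ≤ 0)
    (hstep : ∀ s ≥ T, ∀ w ∈ Icc (1 : ℝ) 2, f (s + w) - f s ≤ c) {s u : ℝ} (hs : T ≤ s)
    (hu : 1 ≤ u) : f (s + u) - f s ≤ (u - 1) * c := by
  have hshort : ∀ s ≥ T, ∀ u ∈ Icc (1 : ℝ) 2, f (s + u) - f s ≤ (u - 1) * c :=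
    fun s hs u hu => (hstep s hs u hu).trans (by nlinarith [hu.2])
  obtain ⟨n, hn⟩ : ∃ n : ℕ, u ≤ n + 2 := (exists_nat_ge u).imp fun n hn => by linarith
  induction n generalizing s u with
  | zero => exact hshort s hs u ⟨hu, by simpa using hn⟩
  | succ n ih =>
    rcases le_or_gt u 2 with hu2 | hu2
    · exact hshort s hs u ⟨hu, hu2⟩
    have hrest := ih (s := s + 1) (u := u - 1) (by linarith) (by linarith)
      (by push_cast at hn; linarith)
    rw [show s + 1 + (u - 1) = s + u by ring] at hrest
    linarith [hstep s hs 1 (by norm_num)]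

section Exponential

variable {H : ℝ → ℝ} {ρ : ℝ}

theorem eventually_forall_mem_Icc_abs_exp_sub_exp_le_mul (hm : Measurable H)
    (hH : ∀ u, Tendsto (fun t => H (t + u) - H t) atTop (𝓝 (ρ * u))) (a b : ℝ) {ε : ℝ}
    (hε : 0 < ε) :
    ∀ᶠ t in atTop, ∀ u ∈ Icc a b, |exp (H (t + u) - H t) - exp (ρ * u)| ≤ ε * exp (ρ * u) := by
  filter_upwards [(addSlowlyVarying_sub_mul_self hH).eventually_forall_mem_Icc_abs_sub_lt
    (hm.sub (measurable_id.const_mul ρ)) a b (lt_min one_pos (half_pos hε))] with t ht u hu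
  have hclose : |H (t + u) - H t - ρ * u| < min 1 (ε / 2) := by
    convert ht u hu using 2; ring
  calc |exp (H (t + u) - H t) - exp (ρ * u)|
      = exp (ρ * u) * |exp (H (t + u) - H t - ρ * u) - 1| := by
        rw [← abs_of_pos (exp_pos (ρ * u)), ← abs_mul, abs_of_pos (exp_pos _), mul_sub_one,
          ← exp_add, add_sub_cancel]
    _ ≤ exp (ρ * u) * (2 * |H (t + u) - H t - ρ * u|) := by
        gcongr; exact abs_exp_sub_one_le (hclose.le.trans (min_le_left _ _))
    _ ≤ ε * exp (ρ * u) := by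
        nlinarith [exp_pos (ρ * u), min_le_right 1 (ε / 2)]

theorem eventually_forall_one_le_sub_le (hm : Measurable H)
    (hH : ∀ u, Tendsto (fun t => H (t + u) - H t) atTop (𝓝 (ρ * u))) (hρ : ρ < 0) :
    ∀ᶠ t in atTop, ∀ u, 1 ≤ u → H (t + u) - H t ≤ (u - 1) * (ρ / 2) := by
  obtain ⟨T, hT⟩ := eventually_atTop.1 <|
    (addSlowlyVarying_sub_mul_self hH).eventually_forall_mem_Icc_abs_sub_lt
      (hm.sub (measurable_id.const_mul ρ)) 1 2 (ε := -ρ / 2) (by linarith)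
  filter_upwards [eventually_ge_atTop T] with t ht u hu
  refine sub_le_mul_of_forall_mem_Icc_one_two (by linarith) (fun s hs w hw => ?_) ht hu
  have := (abs_lt.1 (hT s hs w hw)).2
  nlinarith [hw.1]

theorem eventually_forall_le_abs_exp_sub_exp_le (hm : Measurable H)
    (hH : ∀ u, Tendsto (fun t => H (t + u) - H t) atTop (𝓝 (ρ * u))) (hρ : ρ < 0) (a : ℝ)
    {ε : ℝ} (hε : 0 < ε) :
    ∀ᶠ t in atTop, ∀ u, a ≤ u → |exp (H (t + u) - H t) - exp (ρ * u)| ≤ ε := by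
  have hdecay : ∀ r < 0, ∀ c, ∀ᶠ u in atTop, exp ((u + c) * r) ≤ ε := fun r hr c =>
    (tendsto_exp_atBot.comp ((tendsto_atTop_add_const_right _ c tendsto_id).atTop_mul_const_of_neg
      hr)).eventually (ge_mem_nhds hε)
  obtain ⟨U, hU⟩ := eventually_atTop.1 <| (eventually_ge_atTop 1).and <|
    (hdecay (ρ / 2) (by linarith) (-1)).and (hdecay ρ hρ 0)
  filter_upwards [eventually_forall_mem_Icc_abs_exp_sub_exp_le_mul hm hH a U
    (div_pos hε (exp_pos (ρ * a))), eventually_forall_one_le_sub_le hm hH hρ] with t hnear hfar u hu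
  rcases le_total u U with huU | hUu
  · calc |exp (H (t + u) - H t) - exp (ρ * u)| ≤ ε / exp (ρ * a) * exp (ρ * u) := hnear u ⟨hu, huU⟩
      _ ≤ ε / exp (ρ * a) * exp (ρ * a) := by
          gcongr ?_ * exp ?_; exact mul_le_mul_of_nonpos_left hu hρ.le
      _ = ε := div_mul_cancel₀ _ (exp_pos _).ne'
  · obtain ⟨hU1, hdecay_half, hdecay_full⟩ := hU u hUu
    refine abs_sub_le_of_nonneg_of_le (exp_pos _).le ?_ (exp_pos _).le ?_
    · exact (exp_le_exp.2 (hfar u hU1)).trans (by simpa [sub_eq_add_neg] using hdecay_half)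
    · simpa [mul_comm] using hdecay_full

end Exponential

theorem Filter.Eventually.forall_const_mul_le {𝕜 : Type*} [Field 𝕜] [LinearOrder 𝕜]
    [IsStrictOrderedRing 𝕜] {p : 𝕜 → Prop} (hp : ∀ᶠ y in atTop, p y) {c : 𝕜} (hc : 0 < c) :
    ∀ᶠ y in atTop, ∀ z, c * y ≤ z → p z :=
  (tendsto_id.const_mul_atTop hc).eventually (eventually_forall_ge_atTop.2 hp)

namespace RegularlyVarying

variable {f : ℝ → ℝ} {ρ : ℝ}

theorem tendsto_log_comp_exp_add_sub (hf : RegularlyVarying f ρ) (hne : ∀ᶠ y in atTop, f y ≠ 0)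
    (u : ℝ) : Tendsto (fun t => log (f (exp (t + u))) - log (f (exp t))) atTop (𝓝 (ρ * u)) := by
  have hratio : Tendsto (fun t => f (exp (t + u)) / f (exp t)) atTop (𝓝 (exp (ρ * u))) := by
    simpa [Function.comp_def, rpow_def_of_pos (exp_pos u), exp_add, mul_comm] using
      (hf (exp u) (exp_pos u)).comp tendsto_exp_atTop
  have hlog := (continuousAt_log (exp_pos (ρ * u)).ne').tendsto.comp hratio
  rw [log_exp] at hlog
  refine hlog.congr' ?_
  filter_upwards [tendsto_exp_atTop.eventually hne,
    (tendsto_exp_atTop.comp (tendsto_atTop_add_const_right _ u tendsto_id)).eventually hne]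
    with t ht htu
  exact log_div htu ht

theorem eventually_forall_le_abs_div_sub_rpow_le (hf : RegularlyVarying f ρ) (hm : Measurable f)
    (hρ : ρ < 0) (hpos : ∀ᶠ y in atTop, 0 < f y) {x₀ : ℝ} (hx₀ : 0 < x₀) {ε : ℝ} (hε : 0 < ε) :
    ∀ᶠ y in atTop, ∀ x, x₀ ≤ x → |f (x * y) / f y - x ^ ρ| ≤ ε := by
  have hH := hf.tendsto_log_comp_exp_add_sub (hpos.mono fun y hy => hy.ne')
  have hmH : Measurable fun t => log (f (exp t)) := measurable_log.comp (hm.comp measurable_exp)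
  filter_upwards [tendsto_log_atTop.eventually
      (eventually_forall_le_abs_exp_sub_exp_le hmH hH hρ (log x₀) hε),
    hpos.forall_const_mul_le hx₀, hpos, eventually_gt_atTop 0] with y hy hfxy hfy hy0 x hx
  have hx0 : 0 < x := hx₀.trans_le hx
  have hfx : 0 < f (x * y) := hfxy _ (mul_le_mul_of_nonneg_right hx hy0.le)
  convert hy (log x) (log_le_log hx₀ hx) using 3
  · rw [exp_sub, exp_add, exp_log hy0, exp_log hx0, mul_comm y x, exp_log hfx, exp_log hfy]
  · rw [rpow_def_of_pos hx0, mul_comm]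

end RegularlyVarying

theorem exists_ne_zero_eventually_eq_mul_abs {α : Type*} {l : Filter α} {η : α → ℝ}
    (hsign : (∀ᶠ y in l, 0 < η y) ∨ (∀ᶠ y in l, η y < 0)) :
    ∃ σ : ℝ, σ ≠ 0 ∧ ∀ᶠ y in l, η y = σ * |η y| := by
  rcases hsign with hpos | hneg
  · exact ⟨1, one_ne_zero, hpos.mono fun y hy => by rw [one_mul, abs_of_pos hy]⟩
  · exact ⟨-1, by norm_num, hneg.mono fun y hy => by rw [abs_of_neg hy]; ring⟩

/-- Uniform convergence theorem for regularly varying functions with negative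
index: if η is measurable, eventually nonzero of constant sign, and |η| is
regularly varying of index ρ < 0, then η(xy)/η(y) → x^ρ uniformly in x ≥ x₀. -/
theorem uniform_convergence_reg_varying (η : ℝ → ℝ) (hη : Measurable η)
    (ρ : ℝ) (hρ : ρ < 0)
    (hsign : (∀ᶠ y in atTop, 0 < η y) ∨ (∀ᶠ y in atTop, η y < 0))
    (hRV : RegularlyVarying (fun y => |η y|) ρ) :
    ∀ x₀ : ℝ, 0 < x₀ → ∀ ε > 0, ∀ᶠ y in atTop, ∀ x : ℝ, x₀ ≤ x →
      |η (x * y) / η y - x ^ ρ| ≤ ε := by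
  intro x₀ hx₀ ε hε
  have hpos : ∀ᶠ y in atTop, 0 < |η y| :=
    hsign.elim (·.mono fun _ h => abs_pos.2 h.ne') (·.mono fun _ h => abs_pos.2 h.ne)
  obtain ⟨σ, hσ, hη_sign⟩ := exists_ne_zero_eventually_eq_mul_abs hsign
  filter_upwards [hRV.eventually_forall_le_abs_div_sub_rpow_le hη.abs hρ hpos hx₀ hε,
    hη_sign.forall_const_mul_le hx₀, hη_sign, eventually_gt_atTop 0]
    with y hbound hη_xy hη_y hy x hx
  rw [hη_xy _ (mul_le_mul_of_nonneg_right hx hy.le), hη_y, mul_div_mul_left _ _ hσ]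
  exact hbound x hx
end

section
/- Let Y₁, Y₂, … be i.i.d. Pareto(1) random variables, γ > 0 and θ₀ < 0. Then sup_{θ ∈ [θ₀, 0]} |k^{-1} Σ_{i=1}^k Y_i^θ - 1/(1-θ)| → 0 in probability as k → ∞ (uniform law of large numbers for the class {y ↦ y^θ : θ ∈ [θ₀, 0]}). -/
/-!
The strong law gives convergence in probability of the empirical mean of `Y ^ θ` to
`𝔼[Y ^ θ] = 1 / (1 - θ)` at each fixed `θ`, hence simultaneously on a finite grid of mesh `ε / 3`
in `[θ₀, 0]`. Since `Y ≥ 1` a.s., the empirical mean is increasing in `θ`, and so is `1 / (1 - θ)`,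
which moreover is `1`-Lipschitz on `(-∞, 0]`; bracketing `θ` between two neighbouring grid points
bounds the error at `θ` by `2ε / 3` as soon as all grid errors are below `ε / 3`.
-/

open Real MeasureTheory ProbabilityTheory Filter Set

open scoped Topology

noncomputable def paretoLaw : Measure ℝ :=
  (volume.restrict (Ioi 1)).withDensity fun x => ENNReal.ofReal (x ^ (-2 : ℝ))

lemma integral_paretoLaw (g : ℝ → ℝ) :
    ∫ x, g x ∂paretoLaw = ∫ x in Ioi 1, x ^ (-2 : ℝ) * g x := by
  rw [paretoLaw, integral_withDensity_eq_integral_toReal_smul (by fun_prop)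
    (ae_of_all _ fun _ => ENNReal.ofReal_lt_top)]
  refine setIntegral_congr_fun measurableSet_Ioi fun x hx => ?_
  rw [ENNReal.toReal_ofReal (rpow_nonneg (zero_le_one.trans hx.le) _), smul_eq_mul]

lemma integrable_paretoLaw_iff {g : ℝ → ℝ} :
    Integrable g paretoLaw ↔ IntegrableOn (fun x => x ^ (-2 : ℝ) * g x) (Ioi 1) := by
  rw [paretoLaw, integrable_withDensity_iff_integrable_smul' (by fun_prop)
    (ae_of_all _ fun _ => ENNReal.ofReal_lt_top)]
  refine integrableOn_congr_fun (fun x hx => ?_) measurableSet_Ioi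
  rw [ENNReal.toReal_ofReal (rpow_nonneg (zero_le_one.trans hx.le) _), smul_eq_mul]

lemma paretoLaw_Ioi {y : ℝ} (hy : 1 ≤ y) : paretoLaw (Ioi y) = ENNReal.ofReal (1 / y) := by
  have hy0 : 0 < y := zero_lt_one.trans_le hy
  rw [paretoLaw, withDensity_apply _ measurableSet_Ioi, Measure.restrict_restrict measurableSet_Ioi,
    Ioi_inter_Ioi, sup_eq_left.2 hy, ← ofReal_integral_eq_lintegral_ofReal
      (integrableOn_Ioi_rpow_of_lt (by norm_num) hy0)
      (ae_restrict_of_forall_mem measurableSet_Ioi fun x hx => rpow_nonneg (hy0.trans hx).le _),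
    integral_Ioi_rpow_of_lt (by norm_num) hy0]
  norm_num [rpow_neg_one]

lemma paretoLaw_Iic_one : paretoLaw (Iic 1) = 0 :=
  withDensity_absolutelyContinuous _ _ <| by
    rw [Measure.restrict_apply measurableSet_Iic, Iic_inter_Ioi, Ioc_self, measure_empty]

instance : IsProbabilityMeasure paretoLaw where
  measure_univ := by
    rw [← measure_add_measure_compl measurableSet_Ioi, compl_Ioi, paretoLaw_Ioi le_rfl,
      paretoLaw_Iic_one]
    simp

lemma ae_paretoLaw_one_lt : ∀ᵐ x ∂paretoLaw, 1 < x := by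
  rw [ae_iff]
  simp only [not_lt]
  exact paretoLaw_Iic_one

lemma measure_Iic_of_measure_Ioi_eq_one_div (ν : Measure ℝ) [IsProbabilityMeasure ν]
    (h : ∀ y, 1 ≤ y → ν (Ioi y) = ENNReal.ofReal (1 / y)) (x : ℝ) :
    ν (Iic x) = ENNReal.ofReal (1 - 1 / max 1 x) := by
  have hcompl : ∀ y, 1 ≤ y → ν (Iic y) = ENNReal.ofReal (1 - 1 / y) := fun y hy => by
    rw [← compl_Ioi, prob_compl_eq_one_sub measurableSet_Ioi, h y hy,
      ENNReal.ofReal_sub _ (by positivity), ENNReal.ofReal_one]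
  rcases le_total 1 x with hx | hx
  · rw [max_eq_right hx, hcompl x hx]
  · rw [max_eq_left hx, div_one, sub_self, ENNReal.ofReal_zero]
    refine measure_mono_null (μ := ν) (Iic_subset_Iic.2 hx) ?_
    simpa using hcompl 1 le_rfl

lemma eq_paretoLaw_of_measure_Ioi (ν : Measure ℝ) [IsProbabilityMeasure ν]
    (h : ∀ y, 1 ≤ y → ν (Ioi y) = ENNReal.ofReal (1 / y)) : ν = paretoLaw :=
  Measure.ext_of_Iic _ _ fun x => by
    rw [measure_Iic_of_measure_Ioi_eq_one_div ν h, measure_Iic_of_measure_Ioi_eq_one_div paretoLaw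
      (fun _ => paretoLaw_Ioi)]

lemma integral_rpow_paretoLaw {θ : ℝ} (hθ : θ < 1) : ∫ x, x ^ θ ∂paretoLaw = 1 / (1 - θ) := by
  have : ∫ x in Ioi (1 : ℝ), x ^ (-2 : ℝ) * x ^ θ = ∫ x in Ioi (1 : ℝ), x ^ (θ - 2) :=
    setIntegral_congr_fun measurableSet_Ioi fun x hx => by
      rw [← rpow_add (zero_lt_one.trans hx), neg_add_eq_sub]
  rw [integral_paretoLaw, this, integral_Ioi_rpow_of_lt (by linarith) one_pos, one_rpow,
    show θ - 2 + 1 = -(1 - θ) by ring, neg_div_neg_eq]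

lemma integrable_rpow_paretoLaw {θ : ℝ} (hθ : θ < 1) : Integrable (fun x => x ^ θ) paretoLaw := by
  rw [integrable_paretoLaw_iff]
  refine (integrableOn_Ioi_rpow_of_lt (by linarith : θ - 2 < -1) one_pos).congr_fun
    (fun x hx => ?_) measurableSet_Ioi
  rw [← rpow_add (zero_lt_one.trans hx), neg_add_eq_sub]

lemma map_eq_paretoLaw {Ω : Type*} [MeasurableSpace Ω] {μ : Measure Ω} [IsProbabilityMeasure μ]
    {X : Ω → ℝ} (hX : Measurable X)
    (h : ∀ y : ℝ, 1 ≤ y → μ {ω | y < X ω} = ENNReal.ofReal (1 / y)) : μ.map X = paretoLaw := by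
  have := Measure.isProbabilityMeasure_map (μ := μ) hX.aemeasurable
  exact eq_paretoLaw_of_measure_Ioi _ fun y hy => by
    rw [Measure.map_apply hX measurableSet_Ioi]; exact h y hy

lemma tendsto_measure_abs_average_sub_integral_ge {Ω E : Type*} [MeasurableSpace Ω]
    [MeasurableSpace E] {μ : Measure Ω} [IsFiniteMeasure μ] {ν : Measure E} {X : ℕ → Ω → E}
    (hX : ∀ i, Measurable (X i)) (hindep : Pairwise fun i j => IndepFun (X i) (X j) μ)
    (hlaw : ∀ i, μ.map (X i) = ν) {f : E → ℝ} (hf : Measurable f) (hfi : Integrable f ν)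
    {δ : ℝ} (hδ : 0 < δ) :
    Tendsto (fun k : ℕ => μ {ω | δ ≤ |(k : ℝ)⁻¹ * ∑ i ∈ Finset.range k, f (X i ω)
      - ∫ x, f x ∂ν|}) atTop (𝓝 0) := by
  have hident : ∀ i, IdentDistrib (f ∘ X i) (f ∘ X 0) μ μ := fun i =>
    IdentDistrib.comp ⟨(hX i).aemeasurable, (hX 0).aemeasurable, by rw [hlaw, hlaw]⟩ hf
  have hint : Integrable (f ∘ X 0) μ := by
    rw [← integrable_map_measure hf.aestronglyMeasurable (hX 0).aemeasurable, hlaw]; exact hfi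
  have hmean : ∫ ω, (f ∘ X 0) ω ∂μ = ∫ x, f x ∂ν := by
    rw [← hlaw 0, integral_map (hX 0).aemeasurable hf.aestronglyMeasurable]; rfl
  have hslln := strong_law_ae (fun i => f ∘ X i) hint
    (fun i j hij => (hindep hij).comp hf hf) hident
  rw [hmean] at hslln
  have hmeas : ∀ k : ℕ, AEStronglyMeasurable
      (fun ω => (k : ℝ)⁻¹ • ∑ i ∈ Finset.range k, (f ∘ X i) ω) μ := fun k =>
    (Finset.measurable_sum _ fun i _ => hf.comp (hX i)).const_smul ((k : ℝ)⁻¹)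
      |>.aestronglyMeasurable
  simpa [Real.dist_eq] using tendstoInMeasure_iff_dist.1
    (tendstoInMeasure_of_tendsto_ae hmeas hslln) δ hδ

lemma exists_finset_bracket (a b : ℝ) {h : ℝ} (hh : 0 < h) :
    ∃ G : Finset ℝ, (∀ t ∈ G, t ≤ b) ∧
      ∀ θ ∈ Icc a b, ∃ s ∈ G, ∃ t ∈ G, s ≤ θ ∧ θ ≤ t ∧ t - s ≤ h := by
  refine ⟨(Finset.range (⌊(b - a) / h⌋₊ + 2)).image fun j : ℕ => min b (a + j * h),
    by simp, fun θ hθ => ?_⟩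
  set j := ⌊(θ - a) / h⌋₊
  have hj : j ≤ ⌊(b - a) / h⌋₊ := Nat.floor_le_floor (by gcongr; exact hθ.2)
  have hlo : j * h ≤ θ - a :=
    (le_div_iff₀ hh).1 (Nat.floor_le (div_nonneg (sub_nonneg.2 hθ.1) hh.le))
  have hhi : θ - a < (j + 1) * h := (div_lt_iff₀ hh).1 (Nat.lt_floor_add_one _)
  refine ⟨_, Finset.mem_image_of_mem _ (Finset.mem_range.2 (by omega : j < _)),
    _, Finset.mem_image_of_mem _ (Finset.mem_range.2 (by omega : j + 1 < _)),
    min_le_of_right_le (by linarith), le_min hθ.2 (by push_cast; linarith), ?_⟩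
  push_cast
  simp only [min_def]
  split_ifs <;> linarith

lemma abs_sub_le_of_bracket {α : Type*} [Preorder α] {S : Set α} {F m : α → ℝ}
    (hF : MonotoneOn F S) (hm : MonotoneOn m S) {s θ t : α} (hs : s ∈ S) (hθ : θ ∈ S)
    (ht : t ∈ S) (hsθ : s ≤ θ) (hθt : θ ≤ t) {δ η : ℝ} (hFs : |F s - m s| ≤ δ)
    (hFt : |F t - m t| ≤ δ) (hmst : m t - m s ≤ η) : |F θ - m θ| ≤ δ + η := by
  rw [abs_le] at *
  constructor <;> linarith [hF hs hθ hsθ, hF hθ ht hθt, hm hs hθ hsθ, hm hθ ht hθt]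

lemma monotoneOn_one_div_one_sub : MonotoneOn (fun θ : ℝ => 1 / (1 - θ)) (Iio 1) :=
  fun _ _ _ ht hst => one_div_le_one_div_of_le (sub_pos.2 ht) (by linarith)

lemma one_div_one_sub_sub_le {s t : ℝ} (hst : s ≤ t) (ht : t ≤ 0) :
    1 / (1 - t) - 1 / (1 - s) ≤ t - s := by
  have hts : 0 ≤ t * s := mul_nonneg_of_nonpos_of_nonpos ht (by linarith)
  rw [div_sub_div _ _ (by linarith) (by linarith), div_le_iff₀ (by nlinarith)]
  nlinarith [mul_nonneg (sub_nonneg.2 hst) (neg_nonneg.2 ht),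
    mul_nonneg (sub_nonneg.2 hst) (by linarith : 0 ≤ -s), mul_nonneg (sub_nonneg.2 hst) hts]

lemma monotone_mul_sum_rpow {ι : Type*} (s : Finset ι) {y : ι → ℝ} (hy : ∀ i ∈ s, 1 ≤ y i)
    {c : ℝ} (hc : 0 ≤ c) : Monotone fun θ : ℝ => c * ∑ i ∈ s, y i ^ θ :=
  Monotone.const_mul (fun _ _ hθ => Finset.sum_le_sum fun i hi =>
    monotone_rpow_of_base_ge_one (hy i hi) hθ) hc

lemma iSup_abs_sub_one_div_one_sub_le {F : ℝ → ℝ} (hF : Monotone F) {a δ : ℝ} (hδ : 0 ≤ δ)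
    {G : Finset ℝ} (hG : ∀ t ∈ G, t ≤ 0)
    (hbr : ∀ θ ∈ Icc a 0, ∃ s ∈ G, ∃ t ∈ G, s ≤ θ ∧ θ ≤ t ∧ t - s ≤ δ)
    (hFG : ∀ t ∈ G, |F t - 1 / (1 - t)| ≤ δ) :
    ⨆ θ : Icc a (0 : ℝ), |F θ - 1 / (1 - θ)| ≤ 2 * δ := by
  refine Real.iSup_le (fun ⟨θ, hθ⟩ => ?_) (by positivity)
  obtain ⟨s, hs, t, ht, hsθ, hθt, hst⟩ := hbr θ hθ
  have hmem : ∀ x ≤ (0 : ℝ), x ∈ Iio 1 := fun x hx => hx.trans_lt one_pos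
  rw [two_mul]
  exact abs_sub_le_of_bracket (hF.monotoneOn _) monotoneOn_one_div_one_sub
    (hmem s (hsθ.trans hθ.2)) (hmem θ hθ.2) (hmem t (hG t ht)) hsθ hθt (hFG s hs) (hFG t ht)
    ((one_div_one_sub_sub_le (hsθ.trans hθt) (hG t ht)).trans hst)

lemma tendsto_measure_le_iSup_abs_sub_one_div_one_sub {Ω : Type*} [MeasurableSpace Ω]
    {μ : Measure Ω} {F : ℕ → Ω → ℝ → ℝ} (hF : ∀ k, ∀ᵐ ω ∂μ, Monotone (F k ω))
    (hpt : ∀ t ≤ 0, ∀ δ > 0,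
      Tendsto (fun k => μ {ω | δ ≤ |F k ω t - 1 / (1 - t)|}) atTop (𝓝 0))
    (a : ℝ) {ε : ℝ} (hε : 0 < ε) :
    Tendsto (fun k => μ {ω | ε ≤ ⨆ θ : Icc a (0 : ℝ), |F k ω θ - 1 / (1 - θ)|}) atTop (𝓝 0) := by
  obtain ⟨G, hG, hbr⟩ := exists_finset_bracket a 0 (by positivity : 0 < ε / 3)
  have hsub : ∀ k, {ω | ε ≤ ⨆ θ : Icc a (0 : ℝ), |F k ω θ - 1 / (1 - θ)|} ≤ᵐ[μ]
      ⋃ t ∈ G, {ω | ε / 3 ≤ |F k ω t - 1 / (1 - t)|} := fun k => by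
    filter_upwards [hF k] with ω hmono hsup
    change ε ≤ _ at hsup
    change ω ∈ ⋃ t ∈ G, _
    simp only [mem_iUnion₂, mem_ofPred_eq, exists_prop]
    by_contra! hnot
    have := iSup_abs_sub_one_div_one_sub_le hmono (by positivity) hG hbr
      fun t ht => (hnot t ht).le
    linarith
  exact tendsto_of_tendsto_of_tendsto_of_le_of_le tendsto_const_nhds
    (by simpa using tendsto_finsetSum G fun t ht => hpt t (hG t ht) _ (by positivity))
    (fun _ => zero_le) fun k => (measure_mono_ae (hsub k)).trans (measure_biUnion_finset_le _ _)

theorem pareto_uniform_lln_general {Ω : Type*} [MeasurableSpace Ω]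
    (μ : Measure Ω) [IsProbabilityMeasure μ] (Y : ℕ → Ω → ℝ)
    (hmeas : ∀ i, Measurable (Y i))
    (hindep : iIndepFun Y μ)
    (hPareto : ∀ i, ∀ y : ℝ, 1 ≤ y → μ {ω | y < Y i ω} = ENNReal.ofReal (1 / y))
    (θ₀ : ℝ) :
    ∀ ε > 0,
      Tendsto
        (fun k : ℕ =>
          μ {ω | ε ≤ ⨆ θ : Set.Icc θ₀ (0:ℝ),
              |(k : ℝ)⁻¹ * ∑ i ∈ Finset.range k, (Y i ω) ^ (θ : ℝ)
                - 1 / (1 - (θ : ℝ))|})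
        atTop (nhds 0) := by
  intro ε hε
  have hlaw : ∀ i, μ.map (Y i) = paretoLaw := fun i => map_eq_paretoLaw (hmeas i) (hPareto i)
  have hY : ∀ᵐ ω ∂μ, ∀ i, 1 < Y i ω := ae_all_iff.2 fun i =>
    ae_of_ae_map (hmeas i).aemeasurable ((hlaw i).symm ▸ ae_paretoLaw_one_lt)
  refine tendsto_measure_le_iSup_abs_sub_one_div_one_sub
    (F := fun k ω θ => (k : ℝ)⁻¹ * ∑ i ∈ Finset.range k, Y i ω ^ θ)
    (fun k => hY.mono fun ω hω => monotone_mul_sum_rpow _ (fun i _ => (hω i).le) (by positivity))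
    (fun t ht δ hδ => ?_) θ₀ hε
  have ht1 : t < 1 := ht.trans_lt one_pos
  simpa only [integral_rpow_paretoLaw ht1] using
    tendsto_measure_abs_average_sub_integral_ge hmeas (fun i j hij => hindep.indepFun hij)
      hlaw (by fun_prop) (integrable_rpow_paretoLaw ht1) hδ

/-- Uniform weak law of large numbers for the class {y ↦ y^θ : θ ∈ [θ₀,0]}
with i.i.d. Pareto(1) variables:
sup_{θ ∈ [θ₀,0]} |k⁻¹ Σ_{i<k} Yᵢ^θ - 1/(1-θ)| → 0 in probability. -/
theorem pareto_uniform_lln {Ω : Type*} [MeasurableSpace Ω]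
    (μ : Measure Ω) [IsProbabilityMeasure μ] (Y : ℕ → Ω → ℝ)
    (hmeas : ∀ i, Measurable (Y i))
    (hindep : iIndepFun Y μ)
    (hPareto : ∀ i, ∀ y : ℝ, 1 ≤ y → μ {ω | y < Y i ω} = ENNReal.ofReal (1 / y))
    (γ θ₀ : ℝ) (hγ : 0 < γ) (hθ₀ : θ₀ < 0) :
    ∀ ε > 0,
      Tendsto
        (fun k : ℕ =>
          μ {ω | ε ≤ ⨆ θ : Set.Icc θ₀ (0:ℝ),
              |(k : ℝ)⁻¹ * ∑ i ∈ Finset.range k, (Y i ω) ^ (θ : ℝ)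
                - 1 / (1 - (θ : ℝ))|})
        atTop (nhds 0) :=
  pareto_uniform_lln_general μ Y hmeas hindep hPareto θ₀
end
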